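/- arXiv:1012.0975 — 2 statements merged into one kernel-verified Lean document; each statement's English description precedes it below -/
import Mathlib

section
/- Let $K$ be a real symmetric $p\times p$ matrix, let $\alpha>0$, and define the matrix Newton iteration $X_0=\sqrt{\alpha}\,I$ and $X_{k+1}=\tfrac{1}{2}\big(X_k + X_k^{-1}(K^2+\alpha I)\big)$. Then for every $k\ge 0$ the matrix $X_k$ is symmetric, positive definite (hence invertible, so the iteration is well defined), and commutes with $K$. -/
/-!
If `X` is positive definite and commutes with the Hermitian matrix `K`, then so does `X⁻¹`, hence
`X⁻¹ (K² + α I) = Kᴴ X⁻¹ K + α X⁻¹` is positive semidefinite plus positive definite. So one Newton step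
`½ (X + X⁻¹ (K² + α I))` is again positive definite, and it commutes with `K` because every term does.
Induction from `X₀ = √α I` concludes.
-/

open scoped ComplexOrder

namespace Matrix

variable {n 𝕜 : Type*} [Fintype n] [DecidableEq n]

theorem commute_nonsing_inv_left {R : Type*} [CommRing R] {A B : Matrix n n R}
    (h : Commute A B) : Commute A⁻¹ B := by
  by_cases hA : IsUnit A.det
  · let := A.invertibleOfIsUnitDet hA
    rw [← invOf_eq_nonsing_inv]
    exact h.invOf_left
  · rw [nonsing_inv_apply_not_isUnit A hA]
    exact Commute.zero_left B

variable [RCLike 𝕜]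

noncomputable def newtonSqrtStep (K : Matrix n n 𝕜) (α : ℝ) (X : Matrix n n 𝕜) : Matrix n n 𝕜 :=
  (1 / 2 : ℝ) • (X + X⁻¹ * (K ^ 2 + α • (1 : Matrix n n 𝕜)))

theorem Commute.newtonSqrtStep {K X : Matrix n n 𝕜} (α : ℝ) (h : Commute X K) :
    Commute (newtonSqrtStep K α X) K :=
  (h.add_left ((commute_nonsing_inv_left h).mul_left
    (((Commute.refl K).pow_left 2).add_left ((Commute.one_left K).smul_left α)))).smul_left _

theorem IsHermitian.nonsing_inv_mul_sq_add_smul_one {K X : Matrix n n 𝕜} (hK : K.IsHermitian)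
    (h : Commute X K) (α : ℝ) :
    X⁻¹ * (K ^ 2 + α • (1 : Matrix n n 𝕜)) = Kᴴ * X⁻¹ * K + α • X⁻¹ := by
  rw [mul_add, hK.eq, sq, ← mul_assoc, (commute_nonsing_inv_left h).eq, Matrix.mul_smul, mul_one]

theorem PosDef.newtonSqrtStep {K X : Matrix n n 𝕜} (hX : X.PosDef) (hK : K.IsHermitian)
    (h : Commute X K) {α : ℝ} (hα : 0 < α) : (newtonSqrtStep K α X).PosDef := by
  have hXinv : X⁻¹.PosDef := hX.inv
  unfold Matrix.newtonSqrtStep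
  rw [hK.nonsing_inv_mul_sq_add_smul_one h]
  exact (hX.add (PosDef.posSemidef_add (hXinv.posSemidef.conjTranspose_mul_mul_same K)
    (hXinv.smul hα))).smul (by norm_num)

end Matrix

open Matrix in
/-- The matrix Newton iteration `X 0 = √α • I`,
`X (k+1) = (1/2) • (X k + (X k)⁻¹ * (K ^ 2 + α • I))`, for `K` real symmetric and
`α > 0`, produces matrices that are symmetric positive definite (hence invertible,
so the iteration is well defined) and commute with `K`. -/
theorem matrix_newton_iter_posDef_commute (p : ℕ) (K : Matrix (Fin p) (Fin p) ℝ)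
    (hK : K.IsHermitian) (α : ℝ) (hα : 0 < α) (X : ℕ → Matrix (Fin p) (Fin p) ℝ)
    (hX0 : X 0 = Real.sqrt α • (1 : Matrix (Fin p) (Fin p) ℝ))
    (hXs : ∀ k, X (k + 1) =
      (1 / 2 : ℝ) • (X k + (X k)⁻¹ * (K ^ 2 + α • (1 : Matrix (Fin p) (Fin p) ℝ)))) :
    ∀ k, (X k).PosDef ∧ IsUnit (X k) ∧ X k * K = K * X k := by
  have h : ∀ k, (X k).PosDef ∧ Commute (X k) K := by
    intro k
    induction k with
    | zero =>
      rw [hX0]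
      exact ⟨PosDef.one.smul (Real.sqrt_pos.2 hα), (Commute.one_left K).smul_left _⟩
    | succ k ih =>
      rw [hXs k]
      exact ⟨ih.1.newtonSqrtStep hK ih.2 hα, ih.2.newtonSqrtStep α⟩
  exact fun k => ⟨(h k).1, (h k).1.isUnit, (h k).2⟩
end

section
/- Let $S$ be a real symmetric $p\times p$ matrix and $\lambda\ge 0$. Then the penalized negative log-likelihood $\Phi(\Theta) = -\log\det\Theta + \mathrm{tr}(S\Theta) + \lambda\sum_{i\ne j}|\Theta_{ij}|$ has at most one minimizer over the set of real symmetric positive definite $p\times p$ matrices. -/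
/-! `Θ ↦ -log det Θ` is strictly convex on the cone of positive definite matrices: writing
`A = Lᴴ L`, the combination `a A + b B` equals `Lᴴ (a + b C) L` with `C = L⁻ᴴ B L⁻¹`, so
diagonalizing `C` reduces the claim to the strict concavity of `log` at its eigenvalues. The trace
term is linear and the off-diagonal `ℓ₁` penalty convex, so `Φ` is strictly convex on that cone,
and a strictly convex function has at most one minimizer. -/

open Matrix

namespace Matrix

open Real Finset

variable {n : Type*}

theorem convex_setOf_posDef : Convex ℝ {A : Matrix n n ℝ | A.PosDef} :=
  convex_iff_forall_pos.2 fun _ hA _ hB _ _ ha hb _ => (hA.smul ha).add (hB.smul hb)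

variable [Fintype n]

theorem convexOn_trace_mul (S : Matrix n n ℝ) : ConvexOn ℝ Set.univ fun A => (S * A).trace :=
  ⟨convex_univ, fun _ _ _ _ _ _ _ _ _ => by
    simp only [Matrix.mul_add, Matrix.mul_smul, trace_add, trace_smul, smul_eq_mul, le_refl]⟩

variable [DecidableEq n]

theorem det_conjStarAlgAut {R : Type*} [CommRing R] [StarRing R] (u : unitary (Matrix n n R))
    (X : Matrix n n R) : (Unitary.conjStarAlgAut R _ u X).det = X.det := by
  rw [Unitary.conjStarAlgAut_apply, det_mul_right_comm, Unitary.mul_star_self_of_mem u.2, one_mul]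

theorem PosDef.exists_isUnit_eq_star_mul_self {A : Matrix n n ℝ} (hA : A.PosDef) :
    ∃ L : Matrix n n ℝ, IsUnit L ∧ A = star L * L := by
  open scoped MatrixOrder in
  have hL : A = star (CFC.sqrt A) * CFC.sqrt A := by
    rw [(IsSelfAdjoint.of_nonneg (CFC.sqrt_nonneg A)).star_eq,
      CFC.sqrt_mul_sqrt_self A hA.posSemidef.nonneg]
  refine ⟨CFC.sqrt A, ?_, hL⟩
  have hdet := hA.isUnit
  rw [hL, isUnit_iff_isUnit_det, det_mul] at hdet
  exact (isUnit_iff_isUnit_det _).2 (isUnit_of_mul_isUnit_right hdet)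

theorem PosDef.mul_log_det_lt_log_det_smul_one_add_smul {C : Matrix n n ℝ} (hC : C.PosDef)
    (hC1 : C ≠ 1) {a b : ℝ} (ha : 0 < a) (hb : 0 < b) (hab : a + b = 1) :
    b * log C.det < log (a • 1 + b • C).det := by
  set μ := hC.1.eigenvalues
  set φ := Unitary.conjStarAlgAut ℝ (Matrix n n ℝ) (star hC.1.eigenvectorUnitary)
  have hφC : φ C = diagonal μ := hC.1.conjStarAlgAut_star_eigenvectorUnitary
  have hφ : φ (a • 1 + b • C) = diagonal fun i => a + b * μ i := by
    rw [map_add, map_smul, map_smul, map_one, hφC, ← diagonal_one, ← diagonal_smul,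
      ← diagonal_smul, diagonal_add]
    simp
  have hμ : ∀ i, 0 < μ i := hC.eigenvalues_pos
  obtain ⟨i₀, hi₀⟩ : ∃ i, μ i ≠ 1 := by
    by_contra! h
    refine hC1 (φ.injective (hφC.trans ?_ |>.trans (map_one φ).symm))
    rw [← diagonal_one]
    exact congrArg diagonal (funext h)
  rw [← det_conjStarAlgAut _ C, ← det_conjStarAlgAut _ (a • 1 + b • C), hφC, hφ, det_diagonal,
    det_diagonal, log_prod (fun i _ => (hμ i).ne'), log_prod (fun i _ => by nlinarith [hμ i]),
    mul_sum]
  have hlog := strictConcaveOn_log_Ioi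
  refine sum_lt_sum (fun i _ => ?_) ⟨i₀, mem_univ _, ?_⟩
  · simpa using hlog.concaveOn.2 (Set.mem_Ioi.2 one_pos) (Set.mem_Ioi.2 (hμ i)) ha.le hb.le hab
  · simpa using hlog.2 (Set.mem_Ioi.2 one_pos) (Set.mem_Ioi.2 (hμ i₀)) hi₀.symm ha hb hab

theorem strictConcaveOn_log_det :
    StrictConcaveOn ℝ {A : Matrix n n ℝ | A.PosDef} fun A => log A.det := by
  refine ⟨convex_setOf_posDef, fun A hA B hB hAB a b ha hb hab => ?_⟩
  obtain ⟨L, hL, rfl⟩ := PosDef.exists_isUnit_eq_star_mul_self hA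
  set C := star L⁻¹ * B * L⁻¹
  have hC : C.PosDef := (IsUnit.posDef_star_left_conjugate_iff (isUnit_nonsing_inv_iff.2 hL)).2 hB
  have hBC : B = star L * C * L :=
    calc B = star (L⁻¹ * L) * B * (L⁻¹ * L) := by
          rw [nonsing_inv_mul L ((isUnit_iff_isUnit_det L).1 hL), star_one, Matrix.one_mul,
            Matrix.mul_one]
      _ = star L * C * L := by simp only [C, star_mul, Matrix.mul_assoc]
  have hC1 : C ≠ 1 := fun h => hAB (by rw [hBC, h, Matrix.mul_one])
  have hcomb : a • (star L * L) + b • B = star L * (a • 1 + b • C) * L := by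
    rw [hBC, Matrix.mul_add, Matrix.add_mul, Matrix.mul_smul, Matrix.smul_mul, Matrix.mul_smul,
      Matrix.smul_mul, Matrix.mul_one]
  have hdet : ∀ X, (star L * X * L).det = (star L * L).det * X.det := fun X => by
    simp only [det_mul]; ring
  have hmid : (a • 1 + b • C).PosDef := (PosDef.one.smul ha).add (hC.smul hb)
  have hLL := hA.det_pos
  show a * log (star L * L).det + b * log B.det < log (a • (star L * L) + b • B).det
  rw [hcomb, hdet, hBC, hdet, log_mul hLL.ne' hmid.det_pos.ne',
    log_mul hLL.ne' hC.det_pos.ne']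
  have := hC.mul_log_det_lt_log_det_smul_one_add_smul hC1 ha hb hab
  linear_combination this + log (star L * L).det * hab

theorem convexOn_sum_abs_offDiag :
    ConvexOn ℝ Set.univ fun A : Matrix n n ℝ => ∑ i, ∑ j, if i = j then 0 else |A i j| := by
  refine ⟨convex_univ, fun A _ B _ a b ha hb _ => ?_⟩
  simp only [smul_eq_mul, mul_sum, ← sum_add_distrib]
  gcongr with i _ j _
  split_ifs
  · simp
  · calc |(a • A + b • B) i j| ≤ |a * A i j| + |b * B i j| := abs_add_le _ _
      _ = a * |A i j| + b * |B i j| := by rw [abs_mul, abs_mul, abs_of_nonneg ha, abs_of_nonneg hb]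

end Matrix

theorem penalized_likelihood_at_most_one_minimizer_general (p : ℕ)
    (S : Matrix (Fin p) (Fin p) ℝ) (lam : ℝ) (hlam : 0 ≤ lam)
    (Φ : Matrix (Fin p) (Fin p) ℝ → ℝ)
    (hΦ : ∀ Θ, Φ Θ = -Real.log Θ.det + (S * Θ).trace +
      lam * ∑ i, ∑ j, if i = j then 0 else |Θ i j|)
    (Θ₁ Θ₂ : Matrix (Fin p) (Fin p) ℝ) (hΘ₁ : Θ₁.PosDef) (hΘ₂ : Θ₂.PosDef)
    (hmin₁ : ∀ Θ : Matrix (Fin p) (Fin p) ℝ, Θ.PosDef → Φ Θ₁ ≤ Φ Θ)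
    (hmin₂ : ∀ Θ : Matrix (Fin p) (Fin p) ℝ, Θ.PosDef → Φ Θ₂ ≤ Φ Θ) :
    Θ₁ = Θ₂ := by
  have hΦconv : StrictConvexOn ℝ {Θ : Matrix (Fin p) (Fin p) ℝ | Θ.PosDef} Φ := by
    rw [funext hΦ]
    exact (strictConcaveOn_log_det.neg.add_convexOn ((convexOn_trace_mul S).subset
      (Set.subset_univ _) convex_setOf_posDef)).add_convexOn
      ((convexOn_sum_abs_offDiag.smul hlam).subset (Set.subset_univ _) convex_setOf_posDef)
  exact hΦconv.eq_of_isMinOn (isMinOn_iff.2 hmin₁) (isMinOn_iff.2 hmin₂) hΘ₁ hΘ₂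

/-- The `ℓ₁`-penalized negative log-likelihood
`Φ(Θ) = -log det Θ + tr (S Θ) + λ ∑_{i ≠ j} |Θ i j|` has at most one minimizer
over the set of real symmetric positive definite matrices. -/
theorem penalized_likelihood_at_most_one_minimizer (p : ℕ)
    (S : Matrix (Fin p) (Fin p) ℝ) (hS : S.IsHermitian) (lam : ℝ) (hlam : 0 ≤ lam)
    (Φ : Matrix (Fin p) (Fin p) ℝ → ℝ)
    (hΦ : ∀ Θ, Φ Θ = -Real.log Θ.det + (S * Θ).trace +
      lam * ∑ i, ∑ j, if i = j then 0 else |Θ i j|)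
    (Θ₁ Θ₂ : Matrix (Fin p) (Fin p) ℝ) (hΘ₁ : Θ₁.PosDef) (hΘ₂ : Θ₂.PosDef)
    (hmin₁ : ∀ Θ : Matrix (Fin p) (Fin p) ℝ, Θ.PosDef → Φ Θ₁ ≤ Φ Θ)
    (hmin₂ : ∀ Θ : Matrix (Fin p) (Fin p) ℝ, Θ.PosDef → Φ Θ₂ ≤ Φ Θ) :
    Θ₁ = Θ₂ :=
  penalized_likelihood_at_most_one_minimizer_general p S lam hlam Φ hΦ Θ₁ Θ₂ hΘ₁ hΘ₂ hmin₁ hmin₂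
end
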